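/- Every polynomial sequence f : ℕ → ℤ of degree ≤ d (a polynomial map from the additive monoid of nonnegative integers to the additive group of integers) is given by a polynomial of degree ≤ d: there exists a polynomial p with rational coefficients of degree ≤ d taking integer values on ℕ such that f(n) = p(n) for all n ∈ ℕ. -/

import Mathlib

/-!
Taking `s = 1` in the definition, `d + 1` forward differences kill `f`, so Newton's forward
difference formula `f n = ∑ k ≤ d, (n choose k) Δᵏf(0)` has only `d + 1` terms. Since
`n choose k` is the value at `n` of the rational polynomial `X (X - 1) ⋯ (X - k + 1) / k!`,
this exhibits `f` as a polynomial of degree at most `d`.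
-/

namespace PaperPoly

/-- `ADegLE d f` means that `f : S → G`, from an additive commutative semigroup to an
additive commutative group, is a polynomial map of degree at most `d ∈ ℕ`: the base case
`ADegLE 0 f` means `f` is constant, and `ADegLE (d+1) f` means that for every `s : S` the
difference map `D_s f : t ↦ f (s+t) - f t` satisfies `ADegLE d`. -/
def ADegLE {S : Type*} [AddCommSemigroup S] {G : Type*} [AddCommGroup G] :
    ℕ → (S → G) → Prop
  | 0 => fun f => ∀ t t' : S, f t = f t'
  | d + 1 => fun f => ∀ s : S, ADegLE d (fun t => f (s + t) - f t)

open Finset Polynomial fwdDiff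

section fwdDiff

variable {S G : Type*} [AddCommMonoid S] [AddCommGroup G]

theorem ADegLE.fwdDiff {d : ℕ} {f : S → G} (hf : ADegLE (d + 1) f) (s : S) :
    ADegLE d (Δ_[s] f) := by
  have hΔ : Δ_[s] f = fun t => f (s + t) - f t :=
    funext fun t => by rw [_root_.fwdDiff, add_comm]
  exact hΔ ▸ hf s

theorem ADegLE.fwdDiff_iter_eq_zero {d k : ℕ} {f : S → G} (hf : ADegLE d f) (hk : d < k)
    (s : S) : (Δ_[s])^[k] f = 0 := by
  obtain ⟨j, rfl⟩ : ∃ j, k = j + 1 := ⟨k - 1, by omega⟩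
  rw [Function.iterate_succ_apply]
  induction d generalizing f j with
  | zero =>
    have hΔ : Δ_[s] f = 0 := funext fun t => sub_eq_zero.2 (hf (t + s) t)
    rw [hΔ]
    exact Function.iterate_fixed (fwdDiff_const s (0 : G)) j
  | succ d ih =>
    obtain ⟨i, rfl⟩ : ∃ i, j = i + 1 := ⟨j - 1, by omega⟩
    rw [Function.iterate_succ_apply]
    exact ih (hf.fwdDiff s) i (by omega)

end fwdDiff

theorem eq_sum_choose_smul_fwdDiff_iter {G : Type*} [AddCommGroup G] {f : ℕ → G} {d : ℕ}
    (hf : ∀ k, d < k → (Δ_[1])^[k] f 0 = 0) (n : ℕ) :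
    f n = ∑ k ∈ range (d + 1), n.choose k • (Δ_[1])^[k] f 0 := by
  have hterm : ∀ k ∉ range (min n d + 1), n.choose k • (Δ_[1])^[k] f 0 = 0 := by
    intro k hk
    rcases Nat.lt_or_ge n k with hnk | hkn
    · rw [Nat.choose_eq_zero_of_lt hnk, zero_smul]
    · rw [hf k (by simp only [mem_range, not_lt] at hk; omega), smul_zero]
  have hsub : ∀ m, min n d ≤ m → range (min n d + 1) ⊆ range (m + 1) := fun m hm =>
    range_subset_range.2 (by omega)
  calc f n = f (0 + n • 1) := by simp
    _ = ∑ k ∈ range (n + 1), n.choose k • (Δ_[1])^[k] f 0 := shift_eq_sum_fwdDiff_iter 1 f n 0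
    _ = ∑ k ∈ range (d + 1), n.choose k • (Δ_[1])^[k] f 0 := by
      rw [← sum_subset (hsub n (min_le_left n d)) fun k _ => hterm k,
        ← sum_subset (hsub d (min_le_right n d)) fun k _ => hterm k]

section choosePoly

variable (K : Type*) [Field K]

noncomputable def choosePoly (k : ℕ) : K[X] :=
  (k.factorial : K)⁻¹ • descPochhammer K k

theorem degree_choosePoly_le (k : ℕ) : (choosePoly K k).degree ≤ k :=
  (degree_smul_le _ _).trans <| degree_le_of_natDegree_le (descPochhammer_natDegree K k).le

theorem eval_natCast_choosePoly [CharZero K] (n k : ℕ) :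
    (choosePoly K k).eval (n : K) = n.choose k := by
  have hfac : (k.factorial : K) ≠ 0 := Nat.cast_ne_zero.2 k.factorial_ne_zero
  rw [choosePoly, eval_smul, smul_eq_mul, descPochhammer_eval_eq_descFactorial,
    Nat.descFactorial_eq_factorial_mul_choose, Nat.cast_mul, inv_mul_cancel_left₀ hfac]

end choosePoly

/-- Every polynomial sequence `f : ℕ → ℤ` of degree `≤ d` is given by a polynomial of
degree `≤ d`: there is a polynomial `p` with rational coefficients of degree `≤ d`
(necessarily taking integer values on `ℕ`) such that `f n = p n` for all `n ∈ ℕ`. -/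
theorem polynomial_sequence_int (f : ℕ → ℤ) (d : ℕ) (hf : ADegLE d f) :
    ∃ p : Polynomial ℚ, p.degree ≤ (d : WithBot ℕ) ∧
      ∀ n : ℕ, p.eval (n : ℚ) = (f n : ℚ) := by
  refine ⟨∑ k ∈ range (d + 1), (((Δ_[1])^[k] f 0 : ℤ) : ℚ) • choosePoly ℚ k, ?_, fun n => ?_⟩
  · refine mem_degreeLE.1 <| Submodule.sum_mem _ fun k hk => Submodule.smul_mem _ _ ?_
    exact mem_degreeLE.2 <| (degree_choosePoly_le ℚ k).trans <| by
      exact_mod_cast Nat.lt_succ_iff.1 (mem_range.1 hk)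
  · have hnewton := eq_sum_choose_smul_fwdDiff_iter
      (fun k hk => congrFun (hf.fwdDiff_iter_eq_zero hk 1) 0) n
    simp only [hnewton, eval_finsetSum, eval_smul, eval_natCast_choosePoly, smul_eq_mul,
      nsmul_eq_mul, Int.cast_sum, Int.cast_mul, Int.cast_natCast, mul_comm]

end PaperPoly
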